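/- arXiv:2109.11335 — 4 statements merged into one kernel-verified Lean document; each statement's English description precedes it below -/
import Mathlib

section
/- Let p,q,r,s > 0 with p+q+r+s=1. Let μ₁>1>μ₂>0 be the roots of qx²-(1+r)x+p=0 and μ₃>1>μ₄>0 the roots of qx²-(1-r)x+p=0, and set ζ₁ = ((1+r)²-4pq)^{-1/2}, ζ₂ = ((1-r)²-4pq)^{-1/2}. Define f_n = ½ζ₁μ₁ⁿ + ½ζ₂μ₃ⁿ for n ≤ 0 and f_n = ½ζ₁μ₂ⁿ + ½ζ₂μ₄ⁿ for n ≥ 0, and g_n = -½ζ₁μ₁ⁿ + ½ζ₂μ₃ⁿ for n ≤ 0 and g_n = -½ζ₁μ₂ⁿ + ½ζ₂μ₄ⁿ for n ≥ 0. Then for all n ∈ ℤ: f_n = δ(n,0) + p·f_{n-1} + q·f_{n+1} + r·g_n and g_n = p·g_{n-1} + q·g_{n+1} + r·f_n. -/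
/-!
Writing `u = f + g` and `v = f - g` decouples the two levels: adding and subtracting the two
recurrences gives the one-level recurrences `(1 - r) u n = δ(n,0) + p u (n-1) + q u (n+1)` and
`(1 + r) v n = δ(n,0) + p v (n-1) + q v (n+1)`. Away from `0` these hold for any power of a root of
the corresponding characteristic polynomial `q x² - a x + p`; at `0` the jump of the two-sided
geometric sequence is balanced exactly when its amplitude is the inverse square root of the
discriminant, by Vieta's formulas.
-/

section Field

variable {K : Type*} [Field K] {a p q x y ζ : K}

theorem quadratic_vieta (hx : q * x ^ 2 - a * x + p = 0) (hy : q * y ^ 2 - a * y + p = 0)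
    (hxy : x ≠ y) : q * (x + y) = a ∧ q * (x * y) = p := by
  have hsum : q * (x + y) = a := by
    have h : (q * (x + y) - a) * (x - y) = 0 := by linear_combination hx - hy
    exact sub_eq_zero.mp ((mul_eq_zero.mp h).resolve_right (sub_ne_zero.mpr hxy))
  exact ⟨hsum, by linear_combination -hx + x * hsum⟩

theorem zpow_recurrence_of_quadratic_root (hx : q * x ^ 2 - a * x + p = 0) (hx0 : x ≠ 0)
    (n : ℤ) : a * x ^ n = p * x ^ (n - 1) + q * x ^ (n + 1) := by
  have hn : x ^ n = x ^ (n - 1) * x := by rw [← zpow_add_one₀ hx0, sub_add_cancel]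
  have hn1 : x ^ (n + 1) = x ^ (n - 1) * x ^ 2 := by
    rw [← zpow_natCast, ← zpow_add₀ hx0]; ring_nf
  rw [hn, hn1]
  linear_combination (-x ^ (n - 1)) * hx

def twoSidedGeometric (ζ x y : K) (n : ℤ) : K :=
  if n ≤ 0 then ζ * x ^ n else ζ * y ^ n

theorem twoSidedGeometric_of_nonpos {n : ℤ} (hn : n ≤ 0) :
    twoSidedGeometric ζ x y n = ζ * x ^ n := if_pos hn

theorem twoSidedGeometric_of_nonneg {n : ℤ} (hn : 0 ≤ n) :
    twoSidedGeometric ζ x y n = ζ * y ^ n := by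
  unfold twoSidedGeometric
  split_ifs with h
  · simp [le_antisymm h hn]
  · rfl

theorem twoSidedGeometric_recurrence (hx : q * x ^ 2 - a * x + p = 0)
    (hy : q * y ^ 2 - a * y + p = 0) (hx0 : x ≠ 0) (hy0 : y ≠ 0) (hζ : ζ * (q * (x - y)) = 1)
    (n : ℤ) :
    a * twoSidedGeometric ζ x y n = (if n = 0 then 1 else 0) +
      p * twoSidedGeometric ζ x y (n - 1) + q * twoSidedGeometric ζ x y (n + 1) := by
  rcases lt_trichotomy n 0 with hn | rfl | hn
  · rw [if_neg hn.ne, twoSidedGeometric_of_nonpos hn.le,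
      twoSidedGeometric_of_nonpos (by omega : n - 1 ≤ 0),
      twoSidedGeometric_of_nonpos (by omega : n + 1 ≤ 0)]
    linear_combination ζ * zpow_recurrence_of_quadratic_root hx hx0 n
  · have hxy : x ≠ y := by
      rintro rfl
      simp at hζ
    obtain ⟨hsum, hprod⟩ := quadratic_vieta hx hy hxy
    rw [if_pos rfl, twoSidedGeometric_of_nonpos le_rfl,
      twoSidedGeometric_of_nonpos (by norm_num : (0 : ℤ) - 1 ≤ 0),
      twoSidedGeometric_of_nonneg (by norm_num : (0 : ℤ) ≤ 0 + 1)]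
    rw [zero_sub, zero_add, zpow_zero, zpow_neg_one, zpow_one, ← hsum, ← hprod]
    field_simp
    linear_combination hζ
  · rw [if_neg hn.ne', twoSidedGeometric_of_nonneg hn.le,
      twoSidedGeometric_of_nonneg (by omega : 0 ≤ n - 1),
      twoSidedGeometric_of_nonneg (by omega : 0 ≤ n + 1)]
    linear_combination ζ * zpow_recurrence_of_quadratic_root hy hy0 n

end Field

theorem rpow_neg_half_discrim_mul_root_sub {a p q x y : ℝ} (hq : 0 < q) (hyx : y < x)
    (hx : q * x ^ 2 - a * x + p = 0) (hy : q * y ^ 2 - a * y + p = 0) :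
    (a ^ 2 - 4 * p * q) ^ (-(1 : ℝ) / 2) * (q * (x - y)) = 1 := by
  obtain ⟨hsum, hprod⟩ := quadratic_vieta hx hy hyx.ne'
  have hgap : 0 < q * (x - y) := mul_pos hq (sub_pos.mpr hyx)
  have hdiscrim : a ^ 2 - 4 * p * q = (q * (x - y)) ^ 2 := by
    rw [← hsum, ← hprod]; ring
  rw [hdiscrim, neg_div, Real.rpow_neg (sq_nonneg _), ← Real.sqrt_eq_rpow,
    Real.sqrt_sq hgap.le, inv_mul_cancel₀ hgap.ne']

theorem two_level_explicit_solution_general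
    (p q r : ℝ) (hq : 0 < q)
    (μ₁ μ₂ μ₃ μ₄ ζ₁ ζ₂ : ℝ)
    (hμ₁ : q * μ₁ ^ 2 - (1 + r) * μ₁ + p = 0)
    (hμ₂ : q * μ₂ ^ 2 - (1 + r) * μ₂ + p = 0)
    (hμ₃ : q * μ₃ ^ 2 - (1 - r) * μ₃ + p = 0)
    (hμ₄ : q * μ₄ ^ 2 - (1 - r) * μ₄ + p = 0)
    (hord1 : μ₁ > 1) (hord2 : 1 > μ₂) (hord3 : μ₂ > 0)
    (hord4 : μ₃ > 1) (hord5 : 1 > μ₄) (hord6 : μ₄ > 0)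
    (hζ₁ : ζ₁ = ((1 + r) ^ 2 - 4 * p * q) ^ (-(1:ℝ)/2))
    (hζ₂ : ζ₂ = ((1 - r) ^ 2 - 4 * p * q) ^ (-(1:ℝ)/2))
    (f g : ℤ → ℝ)
    (hf : ∀ n : ℤ, f n = if n ≤ 0 then (1/2) * ζ₁ * μ₁ ^ n + (1/2) * ζ₂ * μ₃ ^ n
                         else (1/2) * ζ₁ * μ₂ ^ n + (1/2) * ζ₂ * μ₄ ^ n)
    (hg : ∀ n : ℤ, g n = if n ≤ 0 then -(1/2) * ζ₁ * μ₁ ^ n + (1/2) * ζ₂ * μ₃ ^ n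
                         else -(1/2) * ζ₁ * μ₂ ^ n + (1/2) * ζ₂ * μ₄ ^ n) :
    ∀ n : ℤ,
      f n = (if n = 0 then 1 else 0) + p * f (n - 1) + q * f (n + 1) + r * g n ∧
      g n = p * g (n - 1) + q * g (n + 1) + r * f n := by
  set u := twoSidedGeometric ζ₂ μ₃ μ₄
  set v := twoSidedGeometric ζ₁ μ₁ μ₂
  have hfuv (n : ℤ) : f n = (u n + v n) / 2 := by
    rw [hf]; unfold u v twoSidedGeometric; split_ifs <;> ring
  have hguv (n : ℤ) : g n = (u n - v n) / 2 := by
    rw [hg]; unfold u v twoSidedGeometric; split_ifs <;> ring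
  have hu := twoSidedGeometric_recurrence hμ₃ hμ₄ (by positivity) hord6.ne'
    (hζ₂ ▸ rpow_neg_half_discrim_mul_root_sub hq (by linarith) hμ₃ hμ₄)
  have hv := twoSidedGeometric_recurrence hμ₁ hμ₂ (by positivity) hord3.ne'
    (hζ₁ ▸ rpow_neg_half_discrim_mul_root_sub hq (by linarith) hμ₁ hμ₂)
  intro n
  simp only [hfuv, hguv]
  constructor
  · linear_combination (hu n + hv n) / 2
  · linear_combination (hu n - hv n) / 2

theorem two_level_explicit_solution
    (p q r s : ℝ) (hp : 0 < p) (hq : 0 < q) (hr : 0 < r) (hs : 0 < s)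
    (hsum : p + q + r + s = 1)
    (μ₁ μ₂ μ₃ μ₄ ζ₁ ζ₂ : ℝ)
    (hμ₁ : q * μ₁ ^ 2 - (1 + r) * μ₁ + p = 0)
    (hμ₂ : q * μ₂ ^ 2 - (1 + r) * μ₂ + p = 0)
    (hμ₃ : q * μ₃ ^ 2 - (1 - r) * μ₃ + p = 0)
    (hμ₄ : q * μ₄ ^ 2 - (1 - r) * μ₄ + p = 0)
    (hord1 : μ₁ > 1) (hord2 : 1 > μ₂) (hord3 : μ₂ > 0)
    (hord4 : μ₃ > 1) (hord5 : 1 > μ₄) (hord6 : μ₄ > 0)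
    (hζ₁ : ζ₁ = ((1 + r) ^ 2 - 4 * p * q) ^ (-(1:ℝ)/2))
    (hζ₂ : ζ₂ = ((1 - r) ^ 2 - 4 * p * q) ^ (-(1:ℝ)/2))
    (f g : ℤ → ℝ)
    (hf : ∀ n : ℤ, f n = if n ≤ 0 then (1/2) * ζ₁ * μ₁ ^ n + (1/2) * ζ₂ * μ₃ ^ n
                         else (1/2) * ζ₁ * μ₂ ^ n + (1/2) * ζ₂ * μ₄ ^ n)
    (hg : ∀ n : ℤ, g n = if n ≤ 0 then -(1/2) * ζ₁ * μ₁ ^ n + (1/2) * ζ₂ * μ₃ ^ n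
                         else -(1/2) * ζ₁ * μ₂ ^ n + (1/2) * ζ₂ * μ₄ ^ n) :
    ∀ n : ℤ,
      f n = (if n = 0 then 1 else 0) + p * f (n - 1) + q * f (n + 1) + r * g n ∧
      g n = p * g (n - 1) + q * g (n + 1) + r * f n :=
  two_level_explicit_solution_general p q r hq μ₁ μ₂ μ₃ μ₄ ζ₁ ζ₂ hμ₁ hμ₂ hμ₃ hμ₄ hord1 hord2 hord3
    hord4 hord5 hord6 hζ₁ hζ₂ f g hf hg
end

section
/- Let p,q,r,s > 0 with p+q+r+s=1, and define f_n, g_n as in the explicit formulas of the two-level walk. Then ∑_{n∈ℤ} f_n converges and equals (r+s)/(s(2r+s)), and ∑_{n∈ℤ} g_n converges and equals r/(s(2r+s)). -/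
lemma hasSum_pos_side {μ : ℝ} (h0 : 0 ≤ μ) (h1 : μ < 1) :
    HasSum (fun n : ℤ => if 0 < n then μ ^ n else 0) (μ * (1 - μ)⁻¹) := by
  have hg := (hasSum_geometric_of_lt_one h0 h1).mul_left μ
  have he : Function.Injective (fun n : ℕ => (n : ℤ) + 1) := by
    intro a b hab; simpa using hab
  rw [← he.hasSum_iff]
  · convert hg using 1
    · rfl
    funext n
    show (if (0:ℤ) < (n:ℤ)+1 then μ ^ ((n:ℤ)+1) else 0) = _
    rw [if_pos (by positivity)]
    rw [show ((n : ℤ) + 1) = ((n + 1 : ℕ) : ℤ) by push_cast; ring, zpow_natCast, pow_succ]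
    ring
  · intro x hx
    rw [if_neg]
    intro hx0
    exact hx ⟨(x - 1).toNat, by simp; omega⟩

lemma hasSum_nonpos_side {μ : ℝ} (h1 : 1 < μ) :
    HasSum (fun n : ℤ => if n ≤ 0 then μ ^ n else 0) (μ * (μ - 1)⁻¹) := by
  have h0 : (0:ℝ) < μ := lt_trans one_pos h1
  have hinv : μ⁻¹ < 1 := by
    rw [inv_lt_one_iff₀]; right; exact h1
  have hg := hasSum_geometric_of_lt_one (by positivity) hinv
  have hval : (1 - μ⁻¹)⁻¹ = μ * (μ - 1)⁻¹ := by
    field_simp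
  rw [hval] at hg
  have he : Function.Injective (fun n : ℕ => -(n : ℤ)) := by
    intro a b hab; simpa using hab
  rw [← he.hasSum_iff]
  · convert hg using 1
    funext n
    show (if -(n:ℤ) ≤ 0 then μ ^ (-(n:ℤ)) else 0) = _
    rw [if_pos (by simp), zpow_neg, zpow_natCast, ← inv_pow]
  · intro x hx
    rw [if_neg]
    intro hx0
    exact hx ⟨(-x).toNat, by simp; omega⟩

theorem two_level_total_visits
    (p q r s : ℝ) (hp : 0 < p) (hq : 0 < q) (hr : 0 < r) (hs : 0 < s)
    (hsum : p + q + r + s = 1)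
    (μ₁ μ₂ μ₃ μ₄ ζ₁ ζ₂ : ℝ)
    (hμ₁ : q * μ₁ ^ 2 - (1 + r) * μ₁ + p = 0)
    (hμ₂ : q * μ₂ ^ 2 - (1 + r) * μ₂ + p = 0)
    (hμ₃ : q * μ₃ ^ 2 - (1 - r) * μ₃ + p = 0)
    (hμ₄ : q * μ₄ ^ 2 - (1 - r) * μ₄ + p = 0)
    (hord1 : μ₁ > 1) (hord2 : 1 > μ₂) (hord3 : μ₂ > 0)
    (hord4 : μ₃ > 1) (hord5 : 1 > μ₄) (hord6 : μ₄ > 0)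
    (hζ₁ : ζ₁ = ((1 + r) ^ 2 - 4 * p * q) ^ (-(1:ℝ)/2))
    (hζ₂ : ζ₂ = ((1 - r) ^ 2 - 4 * p * q) ^ (-(1:ℝ)/2))
    (f g : ℤ → ℝ)
    (hf : ∀ n : ℤ, f n = if n ≤ 0 then (1/2) * ζ₁ * μ₁ ^ n + (1/2) * ζ₂ * μ₃ ^ n
                         else (1/2) * ζ₁ * μ₂ ^ n + (1/2) * ζ₂ * μ₄ ^ n)
    (hg : ∀ n : ℤ, g n = if n ≤ 0 then -(1/2) * ζ₁ * μ₁ ^ n + (1/2) * ζ₂ * μ₃ ^ n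
                         else -(1/2) * ζ₁ * μ₂ ^ n + (1/2) * ζ₂ * μ₄ ^ n) :
    HasSum f ((r + s) / (s * (2 * r + s))) ∧ HasSum g (r / (s * (2 * r + s))) := by
  -- Vieta for the first pair
  have h12ne : μ₁ - μ₂ > 0 := by linarith
  have h34ne : μ₃ - μ₄ > 0 := by linarith
  have h12 : q * (μ₁ + μ₂) = 1 + r := by
    have key : (μ₁ - μ₂) * (q * (μ₁ + μ₂) - (1 + r)) = 0 := by linear_combination hμ₁ - hμ₂
    rcases mul_eq_zero.mp key with h | h
    · linarith
    · linarith
  have hprod12 : q * (μ₁ * μ₂) = p := by linear_combination μ₁ * h12 - hμ₁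
  have h34 : q * (μ₃ + μ₄) = 1 - r := by
    have key : (μ₃ - μ₄) * (q * (μ₃ + μ₄) - (1 - r)) = 0 := by linear_combination hμ₃ - hμ₄
    rcases mul_eq_zero.mp key with h | h
    · linarith
    · linarith
  have hprod34 : q * (μ₃ * μ₄) = p := by linear_combination μ₃ * h34 - hμ₃
  -- discriminants
  have hD1 : (1 + r) ^ 2 - 4 * p * q = (q * (μ₁ - μ₂)) ^ 2 := by
    linear_combination (-(1 + r + q * (μ₁ + μ₂))) * h12 + 4 * q * hprod12
  have hD2 : (1 - r) ^ 2 - 4 * p * q = (q * (μ₃ - μ₄)) ^ 2 := by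
    linear_combination (-(1 - r + q * (μ₃ + μ₄))) * h34 + 4 * q * hprod34
  have hrpow : ∀ x : ℝ, 0 < x → (x ^ 2 : ℝ) ^ (-(1:ℝ)/2) = x⁻¹ := by
    intro x hx
    rw [show (-(1:ℝ)/2) = -(1/2) by ring, Real.rpow_neg (by positivity),
      ← Real.sqrt_eq_rpow, Real.sqrt_sq hx.le]
  have hz1 : ζ₁ = (q * (μ₁ - μ₂))⁻¹ := by
    rw [hζ₁, hD1, hrpow _ (by positivity)]
  have hz2 : ζ₂ = (q * (μ₃ - μ₄))⁻¹ := by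
    rw [hζ₂, hD2, hrpow _ (by positivity)]
  -- the two one-sided sums, combined
  have hd12 : q * ((μ₁ - 1) * (1 - μ₂)) = 2 * r + s := by
    linear_combination h12 - hprod12 - hsum
  have hd34 : q * ((μ₃ - 1) * (1 - μ₄)) = s := by
    linear_combination h34 - hprod34 - hsum
  have e1 : (1/2 * ζ₁) * (μ₁ * (μ₁ - 1)⁻¹) + (1/2 * ζ₁) * (μ₂ * (1 - μ₂)⁻¹)
      = 1 / (2 * (2 * r + s)) := by
    rw [hz1, ← hd12]
    have h1 : μ₁ - 1 ≠ 0 := by linarith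
    have h2 : 1 - μ₂ ≠ 0 := by linarith
    have h3 : μ₁ - μ₂ ≠ 0 := by linarith
    have h4 : q ≠ 0 := hq.ne'
    field_simp
    ring
  have e2 : (1/2 * ζ₂) * (μ₃ * (μ₃ - 1)⁻¹) + (1/2 * ζ₂) * (μ₄ * (1 - μ₄)⁻¹)
      = 1 / (2 * s) := by
    rw [hz2, ← hd34]
    have h1 : μ₃ - 1 ≠ 0 := by linarith
    have h2 : 1 - μ₄ ≠ 0 := by linarith
    have h3 : μ₃ - μ₄ ≠ 0 := by linarith
    have h4 : q ≠ 0 := hq.ne'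
    field_simp
    ring
  -- HasSum building blocks
  have H1 := (hasSum_nonpos_side hord1).mul_left (1/2 * ζ₁)
  have H2 := (hasSum_pos_side hord3.le hord2).mul_left (1/2 * ζ₁)
  have H3 := (hasSum_nonpos_side hord4).mul_left (1/2 * ζ₂)
  have H4 := (hasSum_pos_side hord6.le hord5).mul_left (1/2 * ζ₂)
  have H1' := (hasSum_nonpos_side hord1).mul_left (-(1/2) * ζ₁)
  have H2' := (hasSum_pos_side hord3.le hord2).mul_left (-(1/2) * ζ₁)
  constructor
  · have Hf := (H1.add H2).add (H3.add H4)
    have hfe : f = fun n : ℤ =>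
        (1/2 * ζ₁ * (if n ≤ 0 then μ₁ ^ n else 0) + 1/2 * ζ₁ * (if 0 < n then μ₂ ^ n else 0)) +
        (1/2 * ζ₂ * (if n ≤ 0 then μ₃ ^ n else 0) + 1/2 * ζ₂ * (if 0 < n then μ₄ ^ n else 0)) := by
      funext n
      rw [hf n]
      by_cases hn : n ≤ 0
      · simp only [if_pos hn, if_neg (not_lt.mpr hn)]; ring
      · simp only [if_neg hn, if_pos (not_le.mp hn)]; ring
    rw [hfe]
    convert Hf using 1
    · rfl
    rw [e1, e2]
    have h4 : 2 * r + s ≠ 0 := by positivity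
    field_simp
    ring
  · have Hg := (H1'.add H2').add (H3.add H4)
    have hge : g = fun n : ℤ =>
        (-(1/2) * ζ₁ * (if n ≤ 0 then μ₁ ^ n else 0) + -(1/2) * ζ₁ * (if 0 < n then μ₂ ^ n else 0)) +
        (1/2 * ζ₂ * (if n ≤ 0 then μ₃ ^ n else 0) + 1/2 * ζ₂ * (if 0 < n then μ₄ ^ n else 0)) := by
      funext n
      rw [hg n]
      by_cases hn : n ≤ 0
      · simp only [if_pos hn, if_neg (not_lt.mpr hn)]; ring
      · simp only [if_neg hn, if_pos (not_le.mp hn)]; ring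
    rw [hge]
    convert Hg using 1
    · rfl
    have e1' : (-(1/2) * ζ₁) * (μ₁ * (μ₁ - 1)⁻¹) + (-(1/2) * ζ₁) * (μ₂ * (1 - μ₂)⁻¹)
        = -(1 / (2 * (2 * r + s))) := by linear_combination -e1
    rw [e1', e2]
    have h4 : 2 * r + s ≠ 0 := by positivity
    field_simp
    ring
end

section
/- Let p,q > 0 with p+q < 1, ζ = (1-4pq)^{-1/2}, ξ₁ > 1 > ξ₂ > 0 the roots of qξ²-ξ+p=0, and r > 0. Define f_{n,0} = ζξ₁ⁿ (n≤0), ζξ₂ⁿ (n≥0), and f_{n,1} = (-n+ζ)rζ²ξ₁ⁿ for n ≤ 0, f_{n,1} = (n+ζ)rζ²ξ₂ⁿ for n ≥ 0. Then for all n ∈ ℤ: f_{n,1} = p·f_{n-1,1} + q·f_{n+1,1} + r·f_{n,0}. -/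
/-!
With `P x = q x² - x + p`, a sequence `(a n + b) ξⁿ` at a root `ξ` of `P` satisfies the
recurrence up to the resonance term `a P'(ξ) ξⁿ = a (2 q ξ - 1) ξⁿ`. Since `P(1) < 0`, the roots
satisfy `P'(ξ₁) > 0 > P'(ξ₂)`, and `P'(ξ)² = 1 - 4 p q` gives `ζ P'(ξ₁) = 1`, `ζ P'(ξ₂) = -1`;
so on each side of `0` the resonance term is exactly the forcing `r f_{n,0}`. At the interface
the recurrence mixes the branches, which is harmless because they agree at `n = 0` and `n = 1`.
-/

theorem recurrence_affine_mul_zpow {K : Type*} [Field K] {p q r ξ a b k : K}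
    (hξ : q * ξ ^ 2 - ξ + p = 0) (hξ0 : ξ ≠ 0) (hres : a * (2 * q * ξ - 1) + r * k = 0)
    {g h : ℤ → K} (hg : ∀ n : ℤ, g n = (a * n + b) * ξ ^ n)
    (hh : ∀ n : ℤ, h n = k * ξ ^ n) (n : ℤ) : g n = p * g (n - 1) + q * g (n + 1) + r * h n := by
  have hpξ : p * ξ⁻¹ = 1 - q * ξ := by
    field_simp
    linear_combination hξ
  rw [hg, hg, hg, hh, zpow_sub_one₀ hξ0, zpow_add_one₀ hξ0]
  push_cast
  linear_combination (-(a * (n - 1) + b) * ξ ^ n) * hpξ - ξ ^ n * hres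

theorem recurrence_ite_of_eq_zero_of_eq_one {R : Type*} [Semiring R] {p q r : R}
    {g₁ g₂ h₁ h₂ f f₀ : ℤ → R}
    (hg₁ : ∀ n, g₁ n = p * g₁ (n - 1) + q * g₁ (n + 1) + r * h₁ n)
    (hg₂ : ∀ n, g₂ n = p * g₂ (n - 1) + q * g₂ (n + 1) + r * h₂ n)
    (h0 : g₁ 0 = g₂ 0) (h1 : g₁ 1 = g₂ 1)
    (hf : ∀ n, f n = if n ≤ 0 then g₁ n else g₂ n)
    (hf₀ : ∀ n, f₀ n = if n ≤ 0 then h₁ n else h₂ n) (n : ℤ) :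
    f n = p * f (n - 1) + q * f (n + 1) + r * f₀ n := by
  simp only [hf, hf₀]
  obtain hn | rfl | rfl | hn : n ≤ -1 ∨ n = 0 ∨ n = 1 ∨ 2 ≤ n := by omega
  · rw [if_pos (by omega), if_pos (by omega), if_pos (by omega), if_pos (by omega)]
    exact hg₁ n
  · simpa [← h1] using hg₁ 0
  · simpa [← h0] using hg₂ 1
  · rw [if_neg (by omega), if_neg (by omega), if_neg (by omega), if_neg (by omega)]
    exact hg₂ n

theorem rpow_neg_half_mul_abs_char_deriv {p q ξ : ℝ} (hξ : q * ξ ^ 2 - ξ + p = 0)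
    (hd : 2 * q * ξ - 1 ≠ 0) : (1 - 4 * p * q) ^ (-(1:ℝ) / 2) * |2 * q * ξ - 1| = 1 := by
  have hsq : 1 - 4 * p * q = (2 * q * ξ - 1) ^ 2 := by linear_combination -4 * q * hξ
  rw [hsq, neg_div, Real.rpow_neg (sq_nonneg _), ← Real.sqrt_eq_rpow, Real.sqrt_sq_eq_abs]
  exact inv_mul_cancel₀ (abs_ne_zero.mpr hd)

theorem char_deriv_pos_of_one_lt {p q ξ : ℝ} (hq : 0 < q) (hpq : p + q < 1)
    (hξ : q * ξ ^ 2 - ξ + p = 0) (h : 1 < ξ) : 0 < 2 * q * ξ - 1 := by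
  have key : (ξ - 1) * (q * (ξ + 1) - 1) = 1 - p - q := by linear_combination hξ
  have : 0 < q * (ξ + 1) - 1 := pos_of_mul_pos_right (by linarith) (sub_pos.mpr h).le
  linarith [mul_pos hq (sub_pos.mpr h)]

theorem char_deriv_neg_of_lt_one {p q ξ : ℝ} (hq : 0 < q) (hpq : p + q < 1)
    (hξ : q * ξ ^ 2 - ξ + p = 0) (h : ξ < 1) : 2 * q * ξ - 1 < 0 := by
  have key : (1 - ξ) * (1 - q * (ξ + 1)) = 1 - p - q := by linear_combination hξ
  have : 0 < 1 - q * (ξ + 1) := pos_of_mul_pos_right (by linarith) (sub_pos.mpr h).le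
  linarith [mul_pos hq (sub_pos.mpr h)]

theorem layer1_recurrence_general
    (p q r : ℝ) (hq : 0 < q) (hpq : p + q < 1)
    (ζ ξ₁ ξ₂ : ℝ)
    (hζ : ζ = (1 - 4 * p * q) ^ (-(1:ℝ)/2))
    (hξ₁ : q * ξ₁ ^ 2 - ξ₁ + p = 0) (hξ₂ : q * ξ₂ ^ 2 - ξ₂ + p = 0)
    (h1 : ξ₁ > 1) (h2 : 1 > ξ₂) (h3 : ξ₂ > 0)
    (f₀ f₁ : ℤ → ℝ)
    (hf₀ : ∀ n : ℤ, f₀ n = if n ≤ 0 then ζ * ξ₁ ^ n else ζ * ξ₂ ^ n)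
    (hf₁ : ∀ n : ℤ, f₁ n = if n ≤ 0 then (-n + ζ) * r * ζ ^ 2 * ξ₁ ^ n
                           else (n + ζ) * r * ζ ^ 2 * ξ₂ ^ n) :
    ∀ n : ℤ, f₁ n = p * f₁ (n - 1) + q * f₁ (n + 1) + r * f₀ n := by
  have hd₁ := char_deriv_pos_of_one_lt hq hpq hξ₁ h1
  have hd₂ := char_deriv_neg_of_lt_one hq hpq hξ₂ h2
  have hζd₁ : ζ * (2 * q * ξ₁ - 1) = 1 := by
    simpa only [← hζ, abs_of_pos hd₁] using rpow_neg_half_mul_abs_char_deriv hξ₁ hd₁.ne'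
  have hζd₂ : ζ * (2 * q * ξ₂ - 1) = -1 := by
    simpa only [← hζ, abs_of_neg hd₂, mul_neg, neg_eq_iff_eq_neg]
      using rpow_neg_half_mul_abs_char_deriv hξ₂ hd₂.ne
  have hagree₁ : (-1 + ζ) * r * ζ ^ 2 * ξ₁ = (1 + ζ) * r * ζ ^ 2 * ξ₂ := by
    have hζ0 : ζ ≠ 0 := left_ne_zero_of_mul_eq_one hζd₁
    have hsum : 2 * q * ξ₁ - 1 + (2 * q * ξ₂ - 1) = 0 :=
      (mul_right_injective₀ hζ0) (by linear_combination hζd₁ + hζd₂)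
    have : (ζ - 1) * ξ₁ = (ζ + 1) * ξ₂ :=
      mul_left_cancel₀ hq.ne' (by linear_combination (hζd₁ - hζd₂ - hsum) / 2)
    linear_combination r * ζ ^ 2 * this
  have hg₁ := recurrence_affine_mul_zpow hξ₁ (zero_lt_one.trans h1).ne'
    (a := -(r * ζ ^ 2)) (b := ζ * r * ζ ^ 2) (k := ζ) (by linear_combination (-(r * ζ)) * hζd₁)
    (g := fun n : ℤ => (-n + ζ) * r * ζ ^ 2 * ξ₁ ^ n) (fun n => by ring) (fun n => rfl)
  have hg₂ := recurrence_affine_mul_zpow hξ₂ h3.ne'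
    (a := r * ζ ^ 2) (b := ζ * r * ζ ^ 2) (k := ζ) (by linear_combination (r * ζ) * hζd₂)
    (g := fun n : ℤ => (n + ζ) * r * ζ ^ 2 * ξ₂ ^ n) (fun n => by ring) (fun n => rfl)
  exact recurrence_ite_of_eq_zero_of_eq_one hg₁ hg₂ (by simp) (by simpa using hagree₁) hf₁ hf₀

theorem layer1_recurrence
    (p q r : ℝ) (hp : 0 < p) (hq : 0 < q) (hpq : p + q < 1) (hr : 0 < r)
    (ζ ξ₁ ξ₂ : ℝ)
    (hζ : ζ = (1 - 4 * p * q) ^ (-(1:ℝ)/2))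
    (hξ₁ : q * ξ₁ ^ 2 - ξ₁ + p = 0) (hξ₂ : q * ξ₂ ^ 2 - ξ₂ + p = 0)
    (h1 : ξ₁ > 1) (h2 : 1 > ξ₂) (h3 : ξ₂ > 0)
    (f₀ f₁ : ℤ → ℝ)
    (hf₀ : ∀ n : ℤ, f₀ n = if n ≤ 0 then ζ * ξ₁ ^ n else ζ * ξ₂ ^ n)
    (hf₁ : ∀ n : ℤ, f₁ n = if n ≤ 0 then (-n + ζ) * r * ζ ^ 2 * ξ₁ ^ n
                           else (n + ζ) * r * ζ ^ 2 * ξ₂ ^ n) :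
    ∀ n : ℤ, f₁ n = p * f₁ (n - 1) + q * f₁ (n + 1) + r * f₀ n :=
  layer1_recurrence_general p q r hq hpq ζ ξ₁ ξ₂ hζ hξ₁ hξ₂ h1 h2 h3 f₀ f₁ hf₀ hf₁
end

section
/- Let p,q > 0 with p+q < 1, ζ = (1-4pq)^{-1/2}, ξ₁ > 1 > ξ₂ > 0 roots of qξ²-ξ+p=0, r > 0. Define f_{n,1} = (∓n+ζ)rζ²ξᵢⁿ as before and f_{n,2} = ½(n²-3ζn+3ζ²-1)r²ζ³ξ₁ⁿ for n ≤ 0, f_{n,2} = ½(n²+3ζn+3ζ²-1)r²ζ³ξ₂ⁿ for n ≥ 0. Then for all n ∈ ℤ: f_{n,2} = p·f_{n-1,2} + q·f_{n+1,2} + r·f_{n,1}. -/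
/-!
By Vieta, `q (ξ₁ + ξ₂) = 1` and `q ξ₁ ξ₂ = p`, so `(q (ξ₁ - ξ₂))² = 1 - 4pq` and hence
`ζ (2qξ₁ - 1) = 1`, `ζ (2qξ₂ - 1) = -1`. With `ε = ±1` the two branches of `f₂` are the one
expression `½ (n² - 3εζn + 3ζ² - 1) r² ζ³ ξⁿ`, and the identity `ζ (2qξ - 1) = ε` makes it satisfy
the recurrence for every `n ∈ ℤ` (a polynomial identity in `n` once `ξ^(n-1)` is factored out).
For `n ≠ 0` the recurrence only sees one branch (at `n = 1` because the branches agree at `0`);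
at `n = 0` it mixes both and is checked directly using `p / ξ₁ = q ξ₂`.
-/

section Roots

variable {p q ξ₁ ξ₂ : ℝ}

lemma mul_add_roots_eq_one (hξ₁ : q * ξ₁ ^ 2 - ξ₁ + p = 0) (hξ₂ : q * ξ₂ ^ 2 - ξ₂ + p = 0)
    (hne : ξ₁ ≠ ξ₂) : q * (ξ₁ + ξ₂) = 1 := by
  have h : (q * (ξ₁ + ξ₂) - 1) * (ξ₁ - ξ₂) = 0 := by linear_combination hξ₁ - hξ₂
  simpa [sub_eq_zero, hne] using h

lemma mul_roots_eq (hξ₁ : q * ξ₁ ^ 2 - ξ₁ + p = 0) (hsum : q * (ξ₁ + ξ₂) = 1) :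
    q * ξ₁ * ξ₂ = p := by
  linear_combination ξ₁ * hsum - hξ₁

lemma sq_mul_sub_roots (hsum : q * (ξ₁ + ξ₂) = 1) (hprod : q * ξ₁ * ξ₂ = p) :
    (q * (ξ₁ - ξ₂)) ^ 2 = 1 - 4 * p * q := by
  linear_combination (q * (ξ₁ + ξ₂) + 1) * hsum - 4 * q * hprod

lemma sq_rpow_neg_half {s : ℝ} (hs : 0 ≤ s) : (s ^ 2) ^ (-(1:ℝ) / 2) = s⁻¹ := by
  rw [neg_div, Real.rpow_neg (by positivity), ← Real.sqrt_eq_rpow, Real.sqrt_sq hs]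

lemma rpow_neg_half_mul_sub_roots (hq : 0 < q) (hlt : ξ₂ < ξ₁) (hsum : q * (ξ₁ + ξ₂) = 1)
    (hprod : q * ξ₁ * ξ₂ = p) : (1 - 4 * p * q) ^ (-(1:ℝ) / 2) * (q * (ξ₁ - ξ₂)) = 1 := by
  have hs : 0 < q * (ξ₁ - ξ₂) := mul_pos hq (sub_pos.mpr hlt)
  rw [← sq_mul_sub_roots hsum hprod, sq_rpow_neg_half hs.le, inv_mul_cancel₀ hs.ne']

end Roots

section Branches

variable (r ζ ε ξ : ℝ)

noncomputable def layer1Branch (n : ℤ) : ℝ := (ζ - ε * n) * r * ζ ^ 2 * ξ ^ n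

noncomputable def layer2Branch (n : ℤ) : ℝ :=
  (1/2) * ((n : ℝ) ^ 2 - 3 * ε * ζ * n + 3 * ζ ^ 2 - 1) * r ^ 2 * ζ ^ 3 * ξ ^ n

variable {r ζ ε ξ}

lemma layer2Branch_recurrence {p q : ℝ} (hξ : q * ξ ^ 2 - ξ + p = 0) (hξ0 : ξ ≠ 0)
    (hζ : ζ * (2 * q * ξ - 1) = ε) (hε : ε ^ 2 = 1) (n : ℤ) :
    layer2Branch r ζ ε ξ n = p * layer2Branch r ζ ε ξ (n - 1) + q * layer2Branch r ζ ε ξ (n + 1)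
      + r * layer1Branch r ζ ε ξ n := by
  have hpow : ξ ^ n = ξ ^ (n - 1) * ξ := by rw [← zpow_add_one₀ hξ0, sub_add_cancel]
  have hpow' : ξ ^ (n + 1) = ξ ^ (n - 1) * ξ ^ 2 := by
    rw [← zpow_natCast, ← zpow_add₀ hξ0]; congr 1; push_cast; ring
  simp only [layer2Branch, layer1Branch, hpow, hpow']
  push_cast
  linear_combination (r ^ 2 * ζ ^ 2 * ξ ^ (n - 1) / 2) *
    ((4 * n * ζ - 6 * ε * ζ ^ 2 - ζ * (n ^ 2 - 3 * ε * ζ * n + 3 * ζ ^ 2 + 2 * n - 3 * ε * ζ)) * hξ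
      + ((3 * ε * ζ - 2 * n) * ξ) * hζ + (3 * ζ * ξ) * hε)

end Branches

lemma layer2Branch_junction {p q r ζ ξ₁ ξ₂ : ℝ} (hξ₁0 : ξ₁ ≠ 0) (hprod : q * ξ₁ * ξ₂ = p)
    (hζ₂ : ζ * (2 * q * ξ₂ - 1) = -1) :
    layer2Branch r ζ 1 ξ₁ 0 = p * layer2Branch r ζ 1 ξ₁ (-1) + q * layer2Branch r ζ (-1) ξ₂ 1
      + r * layer1Branch r ζ 1 ξ₁ 0 := by
  have hp : p * ξ₁⁻¹ = q * ξ₂ := by rw [← hprod]; field_simp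
  simp only [layer2Branch, layer1Branch, zpow_neg_one, zpow_zero, zpow_one]
  push_cast
  linear_combination (-3 * r ^ 2 * ζ ^ 3 * (ζ ^ 2 + ζ) / 2) * hp
    - (3 * r ^ 2 * ζ ^ 3 * (ζ + 1) / 2) * hζ₂

theorem layer2_recurrence_general
    (p q r : ℝ) (hq : 0 < q)
    (ζ ξ₁ ξ₂ : ℝ)
    (hζ : ζ = (1 - 4 * p * q) ^ (-(1:ℝ)/2))
    (hξ₁ : q * ξ₁ ^ 2 - ξ₁ + p = 0) (hξ₂ : q * ξ₂ ^ 2 - ξ₂ + p = 0)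
    (h1 : ξ₁ > 1) (h2 : 1 > ξ₂) (h3 : ξ₂ > 0)
    (f₁ f₂ : ℤ → ℝ)
    (hf₁ : ∀ n : ℤ, f₁ n = if n ≤ 0 then (-n + ζ) * r * ζ ^ 2 * ξ₁ ^ n
                           else (n + ζ) * r * ζ ^ 2 * ξ₂ ^ n)
    (hf₂ : ∀ n : ℤ, f₂ n = if n ≤ 0 then
                             (1/2) * ((n : ℝ) ^ 2 - 3 * ζ * n + 3 * ζ ^ 2 - 1) * r ^ 2 * ζ ^ 3 * ξ₁ ^ n
                           else
                             (1/2) * ((n : ℝ) ^ 2 + 3 * ζ * n + 3 * ζ ^ 2 - 1) * r ^ 2 * ζ ^ 3 * ξ₂ ^ n) :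
    ∀ n : ℤ, f₂ n = p * f₂ (n - 1) + q * f₂ (n + 1) + r * f₁ n := by
  have hsum := mul_add_roots_eq_one hξ₁ hξ₂ (by linarith)
  have hprod := mul_roots_eq hξ₁ hsum
  have hζs : ζ * (q * (ξ₁ - ξ₂)) = 1 :=
    hζ ▸ rpow_neg_half_mul_sub_roots hq (by linarith) hsum hprod
  have hζ₁ : ζ * (2 * q * ξ₁ - 1) = 1 := by linear_combination hζs + ζ * hsum
  have hζ₂ : ζ * (2 * q * ξ₂ - 1) = -1 := by linear_combination -hζs + ζ * hsum
  have hf₁_neg : ∀ n ≤ 0, f₁ n = layer1Branch r ζ 1 ξ₁ n := fun n hn => by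
    rw [hf₁, if_pos hn, layer1Branch]; ring
  have hf₁_pos : ∀ n, 0 < n → f₁ n = layer1Branch r ζ (-1) ξ₂ n := fun n hn => by
    rw [hf₁, if_neg hn.not_ge, layer1Branch]; ring
  have hf₂_neg : ∀ n ≤ 0, f₂ n = layer2Branch r ζ 1 ξ₁ n := fun n hn => by
    rw [hf₂, if_pos hn, layer2Branch]; ring
  have hf₂_pos : ∀ n, 0 ≤ n → f₂ n = layer2Branch r ζ (-1) ξ₂ n := fun n hn => by
    rcases hn.lt_or_eq with hn | rfl
    · rw [hf₂, if_neg hn.not_ge, layer2Branch]; ring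
    · simp [hf₂, layer2Branch]
  intro n
  rcases lt_trichotomy n 0 with hn | rfl | hn
  · rw [hf₂_neg n hn.le, hf₂_neg (n - 1) (by omega), hf₂_neg (n + 1) (by omega), hf₁_neg n hn.le]
    exact layer2Branch_recurrence hξ₁ (zero_lt_one.trans h1).ne' hζ₁ (by norm_num) n
  · rw [hf₂_neg 0 le_rfl, hf₂_neg (0 - 1) (by omega), zero_add, hf₂_pos 1 zero_le_one,
      hf₁_neg 0 le_rfl, zero_sub]
    exact layer2Branch_junction (zero_lt_one.trans h1).ne' hprod hζ₂
  · rw [hf₂_pos n hn.le, hf₂_pos (n - 1) (by omega), hf₂_pos (n + 1) (by omega), hf₁_pos n hn]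
    exact layer2Branch_recurrence hξ₂ h3.ne' hζ₂ (by norm_num) n

theorem layer2_recurrence
    (p q r : ℝ) (hp : 0 < p) (hq : 0 < q) (hpq : p + q < 1) (hr : 0 < r)
    (ζ ξ₁ ξ₂ : ℝ)
    (hζ : ζ = (1 - 4 * p * q) ^ (-(1:ℝ)/2))
    (hξ₁ : q * ξ₁ ^ 2 - ξ₁ + p = 0) (hξ₂ : q * ξ₂ ^ 2 - ξ₂ + p = 0)
    (h1 : ξ₁ > 1) (h2 : 1 > ξ₂) (h3 : ξ₂ > 0)
    (f₁ f₂ : ℤ → ℝ)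
    (hf₁ : ∀ n : ℤ, f₁ n = if n ≤ 0 then (-n + ζ) * r * ζ ^ 2 * ξ₁ ^ n
                           else (n + ζ) * r * ζ ^ 2 * ξ₂ ^ n)
    (hf₂ : ∀ n : ℤ, f₂ n = if n ≤ 0 then
                             (1/2) * ((n : ℝ) ^ 2 - 3 * ζ * n + 3 * ζ ^ 2 - 1) * r ^ 2 * ζ ^ 3 * ξ₁ ^ n
                           else
                             (1/2) * ((n : ℝ) ^ 2 + 3 * ζ * n + 3 * ζ ^ 2 - 1) * r ^ 2 * ζ ^ 3 * ξ₂ ^ n) :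
    ∀ n : ℤ, f₂ n = p * f₂ (n - 1) + q * f₂ (n + 1) + r * f₁ n :=
  layer2_recurrence_general p q r hq ζ ξ₁ ξ₂ hζ hξ₁ hξ₂ h1 h2 h3 f₁ f₂ hf₁ hf₂
end
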